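/- arXiv:2605.16801 — 3 statements merged into one kernel-verified Lean document; each statement's English description precedes it below -/
import Mathlib

section
/- Let P be symmetric positive definite, α > 0, and k_i > 0. The ellipsoid E = {e : e^T P^{-1} e ≤ α} is contained in the axis-aligned box {e : |e_i| ≤ k_i for all i} if and only if P_{ii} ≤ k_i² / α for every i. -/
open Matrix

/-- Cauchy–Schwarz for a positive semidefinite real matrix. -/
lemma psd_cauchy_schwarz {m : Type*} [Fintype m] [DecidableEq m]
    {Q : Matrix m m ℝ} (hQ : Q.PosSemidef) (x y : m → ℝ) :
    (x ⬝ᵥ Q *ᵥ y) ^ 2 ≤ (x ⬝ᵥ Q *ᵥ x) * (y ⬝ᵥ Q *ᵥ y) := by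
  obtain ⟨S, hSsym, hSS⟩ : ∃ S : Matrix m m ℝ, S.IsHermitian ∧ S * S = Q :=
    by
      open scoped MatrixOrder in
      obtain ⟨X, hX, -, hXX⟩ := CFC.exists_sqrt_of_isSelfAdjoint_of_quasispectrumRestricts
        hQ.isHermitian (QuasispectrumRestricts.nnreal_of_nonneg hQ.nonneg)
      exact ⟨X, hX, by simpa using hXX⟩
  have key : ∀ u v : m → ℝ, u ⬝ᵥ Q *ᵥ v = (S *ᵥ u) ⬝ᵥ (S *ᵥ v) := by
    intro u v
    rw [← hSS, ← mulVec_mulVec, dotProduct_mulVec u]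
    congr 1
    rw [← mulVec_transpose]
    exact congrArg (· *ᵥ u) (by simpa [IsSymm] using hSsym)
  rw [key x y, key x x, key y y]
  simp only [dotProduct, ← sq]
  exact Finset.sum_mul_sq_le_sq_mul_sq Finset.univ _ _

/-- The ellipsoid `{e : eᵀ P⁻¹ e ≤ α}` is contained in the axis-aligned box
`{e : |e i| ≤ k i, ∀ i}` if and only if `P_{ii} ≤ k_i² / α` for every `i`. -/
theorem stmt2 {n : ℕ} (P : Matrix (Fin n) (Fin n) ℝ) (hP : P.PosDef)
    (α : ℝ) (hα : 0 < α) (k : Fin n → ℝ) (hk : ∀ i, 0 < k i) :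
    {e : Fin n → ℝ | e ⬝ᵥ (P⁻¹ *ᵥ e) ≤ α} ⊆ {e | ∀ i, |e i| ≤ k i} ↔
      ∀ i, P i i ≤ (k i) ^ 2 / α := by
  have hdet : IsUnit P.det := isUnit_iff_ne_zero.2 hP.det_pos.ne'
  have hQ : (P⁻¹).PosDef := hP.inv
  have hPsym : Pᵀ = P := hP.1
  have hxQx : ∀ i : Fin n, (P *ᵥ Pi.single i 1) ⬝ᵥ (P⁻¹ *ᵥ (P *ᵥ Pi.single i 1)) = P i i := by
    intro i
    rw [mulVec_mulVec, Matrix.nonsing_inv_mul P hdet, one_mulVec, dotProduct_comm,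
      single_dotProduct, one_mul, mulVec_single]
    simp
  have hxQe : ∀ (i : Fin n) (e : Fin n → ℝ),
      (P *ᵥ Pi.single i 1) ⬝ᵥ (P⁻¹ *ᵥ e) = e i := by
    intro i e
    rw [dotProduct_mulVec, ← mulVec_transpose, transpose_nonsing_inv, hPsym, mulVec_mulVec,
      Matrix.nonsing_inv_mul P hdet, one_mulVec, single_dotProduct, one_mul]
  have hPii : ∀ i, 0 < P i i := by
    intro i
    have hne : (Pi.single i 1 : Fin n → ℝ) ≠ 0 := by
      intro h
      have := congrFun h i
      simp [Pi.single_eq_same] at this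
    have := hP.dotProduct_mulVec_pos hne
    simpa [single_dotProduct, mulVec_single] using this
  constructor
  · intro hsub i
    set c := Real.sqrt (α / P i i) with hc
    have hc2 : c ^ 2 = α / P i i := Real.sq_sqrt (div_nonneg hα.le (hPii i).le)
    set e := c • (P *ᵥ Pi.single i 1) with he
    have hmem : e ∈ {e : Fin n → ℝ | e ⬝ᵥ (P⁻¹ *ᵥ e) ≤ α} := by
      show e ⬝ᵥ (P⁻¹ *ᵥ e) ≤ α
      rw [he, mulVec_smul, dotProduct_smul, smul_dotProduct, hxQx i, smul_eq_mul, smul_eq_mul,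
        ← mul_assoc, ← sq, hc2, div_mul_cancel₀ _ (hPii i).ne']
    have hle := hsub hmem i
    have hei : e i = c * P i i := by
      rw [he]
      simp [mulVec_single]
    rw [hei] at hle
    have hcpos : 0 ≤ c * P i i := mul_nonneg (Real.sqrt_nonneg _) (hPii i).le
    rw [abs_of_nonneg hcpos] at hle
    have hsq : (c * P i i) ^ 2 ≤ (k i) ^ 2 := pow_le_pow_left₀ hcpos hle 2
    rw [mul_pow, hc2] at hsq
    have h2 : α * P i i ≤ k i ^ 2 := by
      calc α * P i i = (α / P i i) * (P i i) ^ 2 := by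
            rw [sq, div_mul_eq_mul_div, eq_div_iff (hPii i).ne']
            ring
        _ ≤ _ := hsq
    rw [le_div_iff₀ hα]
    linarith
  · intro h e he i
    have hcs := psd_cauchy_schwarz hQ.posSemidef (P *ᵥ Pi.single i 1) e
    rw [hxQe i e, hxQx i] at hcs
    have heQe : 0 ≤ e ⬝ᵥ P⁻¹ *ᵥ e := by
      simpa using hQ.posSemidef.dotProduct_mulVec_nonneg e
    have h1 : (e i) ^ 2 ≤ (k i) ^ 2 := by
      calc (e i) ^ 2 ≤ P i i * (e ⬝ᵥ P⁻¹ *ᵥ e) := hcs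
        _ ≤ ((k i) ^ 2 / α) * α :=
            mul_le_mul (h i) he heQe (by positivity)
        _ = (k i) ^ 2 := div_mul_cancel₀ _ hα.ne'
    calc |e i| = Real.sqrt ((e i) ^ 2) := (Real.sqrt_sq_eq_abs _).symm
      _ ≤ Real.sqrt ((k i) ^ 2) := Real.sqrt_le_sqrt h1
      _ = k i := Real.sqrt_sq (hk i).le
end

section
/- For a symmetric positive definite matrix P and α > 0, if k_i* := sqrt(α · P_{ii}) for each i, then the box Ω* = {e : |e_i| ≤ k_i* for all i} contains the ellipsoid E = {e : e^T P^{-1} e ≤ α}, and Ω* is the smallest axis-aligned box containing E: any box {e : |e_i| ≤ k_i} containing E must satisfy k_i ≥ k_i* for all i. -/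
open Matrix

lemma aux_inv_mulVec {n : ℕ} {P : Matrix (Fin n) (Fin n) ℝ} (hP : P.PosDef)
    (x : Fin n → ℝ) : P⁻¹ *ᵥ (P *ᵥ x) = x := by
  rw [mulVec_mulVec, nonsing_inv_mul P (isUnit_iff_ne_zero.2 hP.det_pos.ne'), one_mulVec]

lemma aux_diag_pos {n : ℕ} {P : Matrix (Fin n) (Fin n) ℝ} (hP : P.PosDef) (i : Fin n) :
    0 < P i i := by
  have := hP.diag_pos (i := i)
  simpa [single_dotProduct, mulVec_single] using this

lemma aux_quad {n : ℕ} {P : Matrix (Fin n) (Fin n) ℝ} (hP : P.PosDef)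
    (e : Fin n → ℝ) (i : Fin n) :
    (e i)^2 ≤ (e ⬝ᵥ (P⁻¹ *ᵥ e)) * P i i := by
  have hQ : (P⁻¹).PosDef := hP.inv
  have hPii := aux_diag_pos hP i
  set c : Fin n → ℝ := P *ᵥ Pi.single i 1 with hc
  set t : ℝ := e i / P i i with ht
  have hsym : P⁻¹ᵀ = P⁻¹ := by
    have := (hP.isHermitian.inv : (P⁻¹).IsHermitian)
    simpa [IsHermitian] using this
  have h1 : e ⬝ᵥ (P⁻¹ *ᵥ c) = e i := by
    rw [hc, aux_inv_mulVec hP, dotProduct_single, mul_one]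
  have h2 : c ⬝ᵥ (P⁻¹ *ᵥ e) = e i := by
    rw [dotProduct_mulVec, ← mulVec_transpose, hsym]
    nth_rewrite 1 [hc]
    rw [aux_inv_mulVec hP, single_dotProduct, one_mul]
  have h3 : c ⬝ᵥ (P⁻¹ *ᵥ c) = P i i := by
    rw [dotProduct_mulVec, ← mulVec_transpose, hsym]
    nth_rewrite 1 [hc]
    rw [aux_inv_mulVec hP, single_dotProduct, one_mul, hc, mulVec_single]
    simp
  have hnn : 0 ≤ (e - t • c) ⬝ᵥ (P⁻¹ *ᵥ (e - t • c)) := by simpa using hQ.posSemidef.dotProduct_mulVec_nonneg (e - t • c)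
  have hexp : (e - t • c) ⬝ᵥ (P⁻¹ *ᵥ (e - t • c))
      = e ⬝ᵥ (P⁻¹ *ᵥ e) - (e i)^2 / P i i := by
    simp only [mulVec_sub, mulVec_smul, dotProduct_sub, sub_dotProduct,
      smul_dotProduct, dotProduct_smul, smul_eq_mul, h1, h2, h3, ht]
    field_simp
    ring
  rw [hexp] at hnn
  have := (div_le_iff₀ hPii).1 (by linarith : (e i)^2 / P i i ≤ e ⬝ᵥ (P⁻¹ *ᵥ e))
  linarith

/-- Theorem 1(3): with `k* i = √(α P_{ii})`, the box `Ω*` contains the ellipsoid `E`,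
and `Ω*` is the smallest axis-aligned box containing `E`. -/
theorem stmt3 {n : ℕ} (P : Matrix (Fin n) (Fin n) ℝ) (hP : P.PosDef)
    (α : ℝ) (hα : 0 < α) (kstar : Fin n → ℝ)
    (hkstar : ∀ i, kstar i = Real.sqrt (α * P i i)) :
    {e : Fin n → ℝ | e ⬝ᵥ (P⁻¹ *ᵥ e) ≤ α} ⊆ {e | ∀ i, |e i| ≤ kstar i} ∧
      ∀ k : Fin n → ℝ,
        {e : Fin n → ℝ | e ⬝ᵥ (P⁻¹ *ᵥ e) ≤ α} ⊆ {e | ∀ i, |e i| ≤ k i} →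
        ∀ i, kstar i ≤ k i := by
  constructor
  · intro e he i
    have h := aux_quad hP e i
    have hPii := aux_diag_pos hP i
    have : (e i)^2 ≤ α * P i i :=
      h.trans (by nlinarith [Set.mem_setOf_eq ▸ he])
    rw [hkstar i, ← Real.sqrt_sq_eq_abs]
    exact Real.sqrt_le_sqrt this
  · intro k hk i
    have hPii := aux_diag_pos hP i
    set s : ℝ := Real.sqrt (α / P i i) with hs
    set e : Fin n → ℝ := s • (P *ᵥ Pi.single i 1) with he
    have hs2 : s * s = α / P i i := Real.mul_self_sqrt (by positivity)
    have hmem : e ⬝ᵥ (P⁻¹ *ᵥ e) ≤ α := by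
      rw [he, mulVec_smul, smul_dotProduct, dotProduct_smul, aux_inv_mulVec hP,
        dotProduct_single, mulVec_single_one]
      simp only [col_apply, smul_eq_mul, mul_one]
      rw [← mul_assoc, hs2]
      field_simp
      exact le_rfl
    have hei : e i = kstar i := by
      rw [he, hkstar i]
      simp only [Pi.smul_apply, mulVec_single_one, col_apply, smul_eq_mul, mul_one]
      rw [hs, ← Real.sqrt_sq hPii.le, ← Real.sqrt_mul (by positivity)]
      congr 1
      field_simp
      rw [Real.sq_sqrt (by positivity)]
    have := hk hmem i
    rw [hei] at this
    calc kstar i ≤ |kstar i| := le_abs_self _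
    _ ≤ k i := this
end

section
/- Theorem 1(1): let b_i, v_{ij} ≥ 0 encode the knapsack data with b_i = α/k_i² − (P_base)_{ii} and v_{ij} = (C_j^T V_j^{-1} C_j)_{ii}, and let S* = {1,…,m} be the full sensor set. If d_i* := b_i − Σ_{j∈S*} v_{ij} > 0 for some i, then for every subset S ⊆ {1,…,m} the posterior covariance P_S with P_S^{-1} = P_base + Σ_{j∈S} C_j^T V_j^{-1} C_j fails the set inclusion {e : e^T P_S^{-1} e ≤ α} ⊆ {e : |e_l| ≤ k_l for all l}. -/
open Matrix

lemma psd_diag_nonneg {n : ℕ} {M : Matrix (Fin n) (Fin n) ℝ} (hM : M.PosSemidef)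
    (i : Fin n) : 0 ≤ M i i := by
  exact hM.diag_nonneg

lemma pd_diag_pos {n : ℕ} {M : Matrix (Fin n) (Fin n) ℝ} (hM : M.PosDef)
    (i : Fin n) : 0 < M i i := by
  exact hM.diag_pos

/-- Theorem 1(1): if the full sensor set leaves a positive deficiency
`d_i* = b_i − Σ_j v_{ij} > 0` in some coordinate, then no sensor subset `S` can
satisfy the set-inclusion constraint for the posterior with information matrix
`P_base + Σ_{j∈S} C_jᵀ V_j⁻¹ C_j`. -/
theorem stmt14 {n p m : ℕ} (Pbase : Matrix (Fin n) (Fin n) ℝ) (hPbase : Pbase.PosDef)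
    (C : Fin m → Matrix (Fin p) (Fin n) ℝ) (V : Fin m → Matrix (Fin p) (Fin p) ℝ)
    (hV : ∀ j, (V j).PosDef) (α : ℝ) (hα : 0 < α) (k : Fin n → ℝ) (hk : ∀ i, 0 < k i)
    (b : Fin n → ℝ) (hb : ∀ i, b i = α / (k i) ^ 2 - Pbase i i)
    (v : Fin n → Fin m → ℝ) (hv : ∀ i j, v i j = ((C j)ᵀ * (V j)⁻¹ * C j) i i)
    (hdef : ∃ i, 0 < b i - ∑ j ∈ Finset.univ, v i j) :
    ∀ S : Finset (Fin m),
      ¬ ({e : Fin n → ℝ |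
            e ⬝ᵥ ((Pbase + ∑ j ∈ S, (C j)ᵀ * (V j)⁻¹ * C j) *ᵥ e) ≤ α} ⊆
          {e | ∀ l, |e l| ≤ k l}) := by
  obtain ⟨i, hi⟩ := hdef
  intro S hsub
  set M : Matrix (Fin n) (Fin n) ℝ := Pbase + ∑ j ∈ S, (C j)ᵀ * (V j)⁻¹ * C j with hM
  -- each term has nonneg diagonal
  have hpsd : ∀ j, ((C j)ᵀ * (V j)⁻¹ * C j).PosSemidef := by
    intro j
    have h1 : ((V j)⁻¹).PosSemidef := ((hV j).inv).posSemidef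
    have := h1.conjTranspose_mul_mul_same (C j)
    simpa using this
  have hvnn : ∀ j, 0 ≤ v i j := fun j => (hv i j) ▸ psd_diag_nonneg (hpsd j) i
  have hMii : M i i = Pbase i i + ∑ j ∈ S, v i j := by
    simp [hM, Matrix.sum_apply, hv]
  have hMii_pos : 0 < M i i := by
    rw [hMii]
    exact add_pos_of_pos_of_nonneg (pd_diag_pos hPbase i)
      (Finset.sum_nonneg fun j _ => hvnn j)
  have hsum_le : ∑ j ∈ S, v i j ≤ ∑ j ∈ Finset.univ, v i j :=
    Finset.sum_le_sum_of_subset_of_nonneg (Finset.subset_univ S) (fun j _ _ => hvnn j)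
  have hMii_lt : M i i < α / (k i) ^ 2 := by
    rw [hMii]
    have := hb i ▸ hi
    linarith
  -- choose t = sqrt (α / M i i)
  set t : ℝ := Real.sqrt (α / M i i) with ht
  have hfrac_pos : 0 < α / M i i := div_pos hα hMii_pos
  have ht2 : t ^ 2 = α / M i i := Real.sq_sqrt (le_of_lt hfrac_pos)
  have hkt : k i < t := by
    have hk2 : (k i) ^ 2 < α / M i i := by
      rw [lt_div_iff₀ hMii_pos]
      calc (k i) ^ 2 * M i i < (k i) ^ 2 * (α / (k i) ^ 2) := by
            exact mul_lt_mul_of_pos_left hMii_lt (pow_pos (hk i) 2)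
        _ = α := by rw [mul_div_cancel₀ _ (pow_ne_zero 2 (ne_of_gt (hk i)))]
    have := Real.sqrt_lt_sqrt (sq_nonneg (k i)) hk2
    rwa [Real.sqrt_sq (le_of_lt (hk i))] at this
  set e : Fin n → ℝ := Pi.single i t with he
  have hquad : e ⬝ᵥ (M *ᵥ e) = t ^ 2 * M i i := by
    simp [he, dotProduct, mulVec, Pi.single_apply, Finset.mul_sum]
    ring
  have hmem : e ∈ {e : Fin n → ℝ | e ⬝ᵥ (M *ᵥ e) ≤ α} := by
    simp only [Set.mem_setOf_eq, hquad, ht2]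
    rw [div_mul_cancel₀ _ (ne_of_gt hMii_pos)]
  have := hsub hmem i
  rw [he] at this
  simp only [Pi.single_eq_same] at this
  have ht_pos : 0 < t := lt_trans (hk i) hkt
  rw [abs_of_pos ht_pos] at this
  linarith
end
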